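/- arXiv:1207.4597 — 2 statements merged into one kernel-verified Lean document; each statement's English description precedes it below -/
import Mathlib

section
/- Let N be a positive homogeneous normalization with each N_{ai} continuous, and let (m̃^{(n)}) be the normalized BP sequence started from a strictly positive message set. (i) If the sequences of beliefs b_i^{(n)} (for every variable node i) and b_a^{(n)} (for every factor node a) associated with m̃^{(n)} converge as n → ∞ to strictly positive limits, then the message sequence m̃^{(n)} converges in ℝ^{E×q}. (ii) Conversely, if m̃^{(n)} converges to a strictly positive limit message set, then all the belief sequences converge. Thus, under these positivity conditions, m-convergence and b-convergence of normalized BP are equivalent. -/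
open Finset Filter

variable {V F : Type*} [Fintype V] [DecidableEq V] [Fintype F] [DecidableEq F]

/-- Configurations on the factor `a`: tuples `x_a ∈ {1,…,q}^a`. -/
abbrev Config (S : F → Finset V) (q : ℕ) (a : F) := {i : V // i ∈ S a} → Fin q

/-- The message `n_{i→a}(x_i) = φ_i(x_i) ∏_{a'∋i, a'≠a} m_{a'→i}(x_i)`. -/
noncomputable def nmsg (S : F → Finset V) {q : ℕ} (φ : V → Fin q → ℝ)
    (m : F → V → Fin q → ℝ) (i : V) (a : F) (x : Fin q) : ℝ :=
  φ i x * ∏ a' ∈ univ.filter (fun a' : F => i ∈ S a' ∧ a' ≠ a), m a' i x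

/-- The belief-propagation update `Θ_{ai}(m)(x_i) = Σ_{x_{a∖i}} ψ_a(x_a) ∏_{j∈a∖i} n_{j→a}(x_j)`. -/
noncomputable def theta (S : F → Finset V) {q : ℕ} (φ : V → Fin q → ℝ)
    (ψ : ∀ a : F, Config S q a → ℝ) (m : F → V → Fin q → ℝ)
    (a : F) (i : V) (hi : i ∈ S a) (x : Fin q) : ℝ :=
  ∑ y ∈ univ.filter (fun y : Config S q a => y ⟨i, hi⟩ = x),
    ψ a y * ∏ j ∈ (S a).attach.filter (fun j => j.1 ≠ i), nmsg S φ m j.1 a (y j)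

/-- The normalization constant `Z_i(m)` making the variable belief sum to `1`. -/
noncomputable def Zv (S : F → Finset V) {q : ℕ} (φ : V → Fin q → ℝ)
    (m : F → V → Fin q → ℝ) (i : V) : ℝ :=
  ∑ x : Fin q, φ i x * ∏ a ∈ univ.filter (fun a : F => i ∈ S a), m a i x

/-- The variable belief `b_i(x_i) = φ_i(x_i) ∏_{a∋i} m_{a→i}(x_i) / Z_i(m)`. -/
noncomputable def bv (S : F → Finset V) {q : ℕ} (φ : V → Fin q → ℝ)
    (m : F → V → Fin q → ℝ) (i : V) (x : Fin q) : ℝ :=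
  (φ i x * ∏ a ∈ univ.filter (fun a : F => i ∈ S a), m a i x) / Zv S φ m i

/-- The normalization constant `Z_a(m)` making the factor belief sum to `1`. -/
noncomputable def Zf (S : F → Finset V) {q : ℕ} (φ : V → Fin q → ℝ)
    (ψ : ∀ a : F, Config S q a → ℝ) (m : F → V → Fin q → ℝ) (a : F) : ℝ :=
  ∑ y : Config S q a, ψ a y * ∏ j ∈ (S a).attach, nmsg S φ m j.1 a (y j)

/-- The factor belief `b_a(x_a) = ψ_a(x_a) ∏_{i∈a} n_{i→a}(x_i) / Z_a(m)`. -/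
noncomputable def bfn (S : F → Finset V) {q : ℕ} (φ : V → Fin q → ℝ)
    (ψ : ∀ a : F, Config S q a → ℝ) (m : F → V → Fin q → ℝ) (a : F)
    (y : Config S q a) : ℝ :=
  (ψ a y * ∏ j ∈ (S a).attach, nmsg S φ m j.1 a (y j)) / Zf S φ ψ m a

/-! Both beliefs are products of messages up to normalization: `b_i(x_i) ∝ m_{a→i}(x_i) n_{i→a}(x_i)`
and `b_a(x_a) ∝ ψ_a(x_a) n_{i→a}(x_i) ∏_{j ≠ i} n_{j→a}(x_j)`. Comparing `b_i` and `b_a` at two values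
of `x_i`, with the other coordinates of `x_a` fixed, cancels `n_{i→a}` and expresses the ratio
`m_{a→i}(x) / m_{a→i}(x₀)` through beliefs and `ψ_a` alone, so beliefs converging to positive limits
make these ratios converge. Every iterate has normalization `1`, so by homogeneity it is the
renormalization of its vector of ratios, and continuity of `N` carries the convergence over to the
messages. The converse is continuity of the beliefs at a positive message set. -/

section Normalization

variable {ι α : Type*} {N : (ι → ℝ) → ℝ}

theorem normalization_pos [Nonempty ι]
    (hzero : ∀ u : ι → ℝ, (∀ x, 0 ≤ u x) → (N u = 0 ↔ u = 0))
    (hnonneg : ∀ u : ι → ℝ, (∀ x, 0 ≤ u x) → 0 ≤ N u)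
    {u : ι → ℝ} (hu : ∀ x, 0 < u x) : 0 < N u := by
  refine (hnonneg u fun x => (hu x).le).lt_of_ne fun h => ?_
  obtain ⟨x⟩ := ‹Nonempty ι›
  exact (hu x).ne' (congrFun ((hzero u fun x => (hu x).le).mp h.symm) x)

theorem normalization_div_self_eq_one
    (hhom : ∀ lam : ℝ, 0 ≤ lam → ∀ u : ι → ℝ, (∀ x, 0 ≤ u x) →
      N (fun x => lam * u x) = lam * N u)
    {v : ι → ℝ} (hv : ∀ x, 0 ≤ v x) (hNv : 0 < N v) :
    N (fun x => v x / N v) = 1 := by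
  simp_rw [div_eq_inv_mul]
  rw [hhom _ (inv_nonneg.mpr hNv.le) v hv, inv_mul_cancel₀ hNv.ne']

theorem tendsto_of_tendsto_div_of_normalization_eq_one
    (hhom : ∀ lam : ℝ, 0 ≤ lam → ∀ u : ι → ℝ, (∀ x, 0 ≤ u x) →
      N (fun x => lam * u x) = lam * N u)
    (hcont : Continuous N) {l : Filter α} {u : α → ι → ℝ} {ρ : ι → ℝ} {x₀ : ι}
    (hu : ∀ᶠ n in l, (∀ x, 0 < u n x) ∧ N (u n) = 1)
    (hρ : ∀ x, Tendsto (fun n => u n x / u n x₀) l (nhds (ρ x))) (hNρ : N ρ ≠ 0) (x : ι) :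
    Tendsto (fun n => u n x) l (nhds (ρ x / N ρ)) := by
  have hN : Tendsto (fun n => N fun x => u n x / u n x₀) l (nhds (N ρ)) :=
    (hcont.tendsto ρ).comp (tendsto_pi_nhds.mpr hρ)
  refine ((hρ x).div hN hNρ).congr' ?_
  filter_upwards [hu] with n ⟨hpos, hnorm⟩
  have hscale : N (fun x => u n x / u n x₀) = (u n x₀)⁻¹ := by
    simp_rw [div_eq_inv_mul]
    rw [hhom _ (inv_nonneg.mpr (hpos x₀).le) _ fun x => (hpos x).le, hnorm, mul_one]
  show u n x / u n x₀ / N (fun x => u n x / u n x₀) = u n x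
  rw [hscale, div_inv_eq_mul, div_mul_cancel₀ _ (hpos x₀).ne']

end Normalization

def EdgePositive (S : F → Finset V) {q : ℕ} (m : F → V → Fin q → ℝ) : Prop :=
  ∀ a i, i ∈ S a → ∀ x, 0 < m a i x

section BeliefPropagation

variable {S : F → Finset V} {q : ℕ} {φ : V → Fin q → ℝ} {ψ : ∀ a : F, Config S q a → ℝ}

omit [Fintype V]

section Beliefs

variable {m : F → V → Fin q → ℝ}

theorem EdgePositive.nmsg_pos (hm : EdgePositive S m) (hφ : ∀ i x, 0 < φ i x)
    (i : V) (a : F) (x : Fin q) : 0 < nmsg S φ m i a x :=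
  mul_pos (hφ i x) (prod_pos fun _ ha' => hm _ i (mem_filter.mp ha').2.1 x)

theorem EdgePositive.theta_pos (hm : EdgePositive S m) (hφ : ∀ i x, 0 < φ i x)
    (hψ : ∀ a y, 0 < ψ a y) (a : F) (i : V) (hi : i ∈ S a) (x : Fin q) :
    0 < theta S φ ψ m a i hi x :=
  sum_pos (fun y _ => mul_pos (hψ a y) (prod_pos fun j _ => hm.nmsg_pos hφ j.1 a (y j)))
    ⟨fun _ => x, by simp⟩

omit [DecidableEq F] in
theorem EdgePositive.Zv_pos [Nonempty (Fin q)] (hm : EdgePositive S m)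
    (hφ : ∀ i x, 0 < φ i x) (i : V) : 0 < Zv S φ m i :=
  sum_pos (fun x _ => mul_pos (hφ i x) (prod_pos fun _ ha => hm _ i (mem_filter.mp ha).2 x))
    univ_nonempty

theorem EdgePositive.Zf_pos (hm : EdgePositive S m) (hφ : ∀ i x, 0 < φ i x)
    (hψ : ∀ a y, 0 < ψ a y) (a : F) [Nonempty (Config S q a)] : 0 < Zf S φ ψ m a :=
  sum_pos (fun y _ => mul_pos (hψ a y) (prod_pos fun j _ => hm.nmsg_pos hφ j.1 a (y j)))
    univ_nonempty

theorem phi_mul_prod_eq_mul_nmsg {a : F} {i : V} (hi : i ∈ S a) (x : Fin q) :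
    φ i x * ∏ a' ∈ univ.filter (fun a' => i ∈ S a'), m a' i x = m a i x * nmsg S φ m i a x := by
  have hne : univ.filter (fun a' => i ∈ S a' ∧ a' ≠ a)
      = (univ.filter (fun a' => i ∈ S a')).erase a := by
    ext
    simp [and_comm]
  rw [nmsg, hne, mul_left_comm, mul_prod_erase _ (fun a' => m a' i x) (by simpa using hi)]

theorem bv_eq_mul_nmsg_div {a : F} {i : V} (hi : i ∈ S a) (x : Fin q) :
    bv S φ m i x = m a i x * nmsg S φ m i a x / Zv S φ m i := by
  rw [bv, phi_mul_prod_eq_mul_nmsg hi]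

theorem prod_nmsg_update_mul {a : F} {i : V} (hi : i ∈ S a) (y : Config S q a) (x : Fin q) :
    (∏ j ∈ (S a).attach, nmsg S φ m j.1 a (Function.update y ⟨i, hi⟩ x j))
      * nmsg S φ m i a (y ⟨i, hi⟩)
      = (∏ j ∈ (S a).attach, nmsg S φ m j.1 a (y j)) * nmsg S φ m i a x := by
  simp_rw [Function.apply_update (fun j : {v // v ∈ S a} => nmsg S φ m j.1 a)]
  rw [prod_update_of_mem (mem_attach _ _), ← prod_erase_mul _ _ (mem_attach _ ⟨i, hi⟩),
    sdiff_singleton_eq_erase]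
  ring

theorem EdgePositive.div_eq_bv_div_mul_bfn_div (hm : EdgePositive S m) (hφ : ∀ i x, 0 < φ i x)
    (hψ : ∀ a y, 0 < ψ a y) {a : F} {i : V} (hi : i ∈ S a) (y : Config S q a) (x : Fin q) :
    m a i x / m a i (y ⟨i, hi⟩)
      = bv S φ m i x / bv S φ m i (y ⟨i, hi⟩)
        * (bfn S φ ψ m a y / bfn S φ ψ m a (Function.update y ⟨i, hi⟩ x))
        * (ψ a (Function.update y ⟨i, hi⟩ x) / ψ a y) := by
  have : Nonempty (Fin q) := ⟨x⟩
  have : Nonempty (Config S q a) := ⟨y⟩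
  have hprod := prod_nmsg_update_mul (φ := φ) (m := m) hi y x
  have := hm a i hi x
  have := hm a i hi (y ⟨i, hi⟩)
  have := hm.nmsg_pos hφ i a x
  have := hm.nmsg_pos hφ i a (y ⟨i, hi⟩)
  have := hm.Zv_pos hφ i
  have := hm.Zf_pos hφ hψ a
  have := hψ a y
  have := hψ a (Function.update y ⟨i, hi⟩ x)
  have : 0 < ∏ j ∈ (S a).attach, nmsg S φ m j.1 a (y j) :=
    prod_pos fun j _ => hm.nmsg_pos hφ _ _ _
  have : 0 < ∏ j ∈ (S a).attach, nmsg S φ m j.1 a (Function.update y ⟨i, hi⟩ x j) :=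
    prod_pos fun j _ => hm.nmsg_pos hφ _ _ _
  rw [bv_eq_mul_nmsg_div hi, bv_eq_mul_nmsg_div hi, bfn, bfn]
  field_simp
  linear_combination hprod

end Beliefs

section Convergence

variable {α : Type*} {l : Filter α} {m : α → F → V → Fin q → ℝ} {ml : F → V → Fin q → ℝ}

theorem tendsto_nmsg
    (hlim : ∀ a i, i ∈ S a → ∀ x, Tendsto (fun n => m n a i x) l (nhds (ml a i x)))
    (i : V) (a : F) (x : Fin q) :
    Tendsto (fun n => nmsg S φ (m n) i a x) l (nhds (nmsg S φ ml i a x)) :=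
  tendsto_const_nhds.mul <| tendsto_finsetProd _ fun _ ha' => hlim _ i (mem_filter.mp ha').2.1 x

omit [DecidableEq F] in
theorem tendsto_bv (hφ : ∀ i x, 0 < φ i x) (hml : EdgePositive S ml)
    (hlim : ∀ a i, i ∈ S a → ∀ x, Tendsto (fun n => m n a i x) l (nhds (ml a i x)))
    (i : V) (x : Fin q) :
    Tendsto (fun n => bv S φ (m n) i x) l (nhds (bv S φ ml i x)) := by
  have : Nonempty (Fin q) := ⟨x⟩
  have hnum : ∀ x, Tendsto (fun n => φ i x * ∏ a ∈ univ.filter (fun a => i ∈ S a), m n a i x) l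
      (nhds (φ i x * ∏ a ∈ univ.filter (fun a => i ∈ S a), ml a i x)) := fun x =>
    tendsto_const_nhds.mul <| tendsto_finsetProd _ fun _ ha => hlim _ i (mem_filter.mp ha).2 x
  exact (hnum x).div (tendsto_finsetSum _ fun x _ => hnum x) (hml.Zv_pos hφ i).ne'

theorem tendsto_bfn (hφ : ∀ i x, 0 < φ i x) (hψ : ∀ a y, 0 < ψ a y) (hml : EdgePositive S ml)
    (hlim : ∀ a i, i ∈ S a → ∀ x, Tendsto (fun n => m n a i x) l (nhds (ml a i x)))
    (a : F) (y : Config S q a) :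
    Tendsto (fun n => bfn S φ ψ (m n) a y) l (nhds (bfn S φ ψ ml a y)) := by
  have : Nonempty (Config S q a) := ⟨y⟩
  have hnum : ∀ y : Config S q a,
      Tendsto (fun n => ψ a y * ∏ j ∈ (S a).attach, nmsg S φ (m n) j.1 a (y j)) l
        (nhds (ψ a y * ∏ j ∈ (S a).attach, nmsg S φ ml j.1 a (y j))) := fun y =>
    tendsto_const_nhds.mul <| tendsto_finsetProd _ fun j _ => tendsto_nmsg hlim j.1 a (y j)
  exact (hnum y).div (tendsto_finsetSum _ fun y _ => hnum y) (hml.Zf_pos hφ hψ a).ne'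

theorem exists_pos_tendsto_div_of_tendsto_beliefs (hm : ∀ n, EdgePositive S (m n))
    (hφ : ∀ i x, 0 < φ i x) (hψ : ∀ a y, 0 < ψ a y)
    {bl : V → Fin q → ℝ} {bla : ∀ a : F, Config S q a → ℝ}
    (hbl : ∀ i x, 0 < bl i x) (hbla : ∀ a y, 0 < bla a y)
    (hbv : ∀ i x, Tendsto (fun n => bv S φ (m n) i x) l (nhds (bl i x)))
    (hbfn : ∀ a y, Tendsto (fun n => bfn S φ ψ (m n) a y) l (nhds (bla a y)))
    {a : F} {i : V} (hi : i ∈ S a) (x₀ x : Fin q) :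
    ∃ r, 0 < r ∧ Tendsto (fun n => m n a i x / m n a i x₀) l (nhds r) := by
  set y : Config S q a := fun _ => x₀
  set y' := Function.update y ⟨i, hi⟩ x
  have hlim := (((hbv i x).div (hbv i x₀) (hbl i x₀).ne').mul
    ((hbfn a y).div (hbfn a y') (hbla a y').ne')).mul (tendsto_const_nhds (x := ψ a y' / ψ a y))
  have := hbl i x; have := hbl i x₀; have := hbla a y; have := hbla a y'
  have := hψ a y; have := hψ a y'
  exact ⟨_, by positivity,
    hlim.congr fun n => ((hm n).div_eq_bv_div_mul_bfn_div hφ hψ hi y x).symm⟩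

end Convergence

section NormalizedBP

variable {N : F → V → (Fin q → ℝ) → ℝ} {mt : ℕ → F → V → Fin q → ℝ}

theorem edgePositive_normalizedBP (hφ : ∀ i x, 0 < φ i x) (hψ : ∀ a y, 0 < ψ a y)
    (hNzero : ∀ a i, i ∈ S a → ∀ u : Fin q → ℝ, (∀ x, 0 ≤ u x) → (N a i u = 0 ↔ u = 0))
    (hNnonneg : ∀ a i, i ∈ S a → ∀ u : Fin q → ℝ, (∀ x, 0 ≤ u x) → 0 ≤ N a i u)
    (hm0 : EdgePositive S (mt 0))
    (hrect : ∀ n a i (hi : i ∈ S a) (x : Fin q),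
      mt (n + 1) a i x = theta S φ ψ (mt n) a i hi x / N a i (theta S φ ψ (mt n) a i hi))
    (n : ℕ) : EdgePositive S (mt n) := by
  induction n with
  | zero => exact hm0
  | succ n ih =>
    intro a i hi x
    have : Nonempty (Fin q) := ⟨x⟩
    rw [hrect n a i hi x]
    exact div_pos (ih.theta_pos hφ hψ a i hi x)
      (normalization_pos (hNzero a i hi) (hNnonneg a i hi) (ih.theta_pos hφ hψ a i hi))

theorem normalization_normalizedBP_eq_one [Nonempty (Fin q)]
    (hφ : ∀ i x, 0 < φ i x) (hψ : ∀ a y, 0 < ψ a y)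
    (hNhom : ∀ a i, i ∈ S a → ∀ lam : ℝ, 0 ≤ lam → ∀ u : Fin q → ℝ, (∀ x, 0 ≤ u x) →
      N a i (fun x => lam * u x) = lam * N a i u)
    (hNzero : ∀ a i, i ∈ S a → ∀ u : Fin q → ℝ, (∀ x, 0 ≤ u x) → (N a i u = 0 ↔ u = 0))
    (hNnonneg : ∀ a i, i ∈ S a → ∀ u : Fin q → ℝ, (∀ x, 0 ≤ u x) → 0 ≤ N a i u)
    {n : ℕ} (hm : EdgePositive S (mt n))
    (hrect : ∀ n a i (hi : i ∈ S a) (x : Fin q),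
      mt (n + 1) a i x = theta S φ ψ (mt n) a i hi x / N a i (theta S φ ψ (mt n) a i hi))
    {a : F} {i : V} (hi : i ∈ S a) : N a i (mt (n + 1) a i) = 1 := by
  have hθ := hm.theta_pos hφ hψ a i hi
  rw [funext (hrect n a i hi)]
  exact normalization_div_self_eq_one (hNhom a i hi) (fun x => (hθ x).le)
    (normalization_pos (hNzero a i hi) (hNnonneg a i hi) hθ)

end NormalizedBP

end BeliefPropagation

theorem m_convergence_iff_b_convergence_general
    (q : ℕ) (S : F → Finset V)
    (φ : V → Fin q → ℝ) (ψ : ∀ a : F, Config S q a → ℝ)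
    (hφ : ∀ i x, 0 < φ i x) (hψ : ∀ a y, 0 < ψ a y)
    (N : F → V → (Fin q → ℝ) → ℝ)
    (hNhom : ∀ a i, i ∈ S a → ∀ lam : ℝ, 0 ≤ lam → ∀ u : Fin q → ℝ, (∀ x, 0 ≤ u x) →
      N a i (fun x => lam * u x) = lam * N a i u)
    (hNzero : ∀ a i, i ∈ S a → ∀ u : Fin q → ℝ, (∀ x, 0 ≤ u x) → (N a i u = 0 ↔ u = 0))
    (hNnonneg : ∀ a i, i ∈ S a → ∀ u : Fin q → ℝ, (∀ x, 0 ≤ u x) → 0 ≤ N a i u)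
    (hNcont : ∀ a i, i ∈ S a → Continuous (N a i))
    (mt : ℕ → F → V → Fin q → ℝ)
    (hm0 : ∀ a i, i ∈ S a → ∀ x, 0 < mt 0 a i x)
    (hrect : ∀ n a i (hi : i ∈ S a) (x : Fin q),
      mt (n + 1) a i x
        = theta S φ ψ (mt n) a i hi x / N a i (theta S φ ψ (mt n) a i hi)) :
    -- (i) b-convergence (to strictly positive limits) implies m-convergence
    ((∀ (bl : V → Fin q → ℝ) (bla : ∀ a : F, Config S q a → ℝ),
        (∀ i x, 0 < bl i x) → (∀ a y, 0 < bla a y) →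
        (∀ i x, Tendsto (fun n => bv S φ (mt n) i x) atTop (nhds (bl i x))) →
        (∀ (a : F) (y : Config S q a),
          Tendsto (fun n => bfn S φ ψ (mt n) a y) atTop (nhds (bla a y))) →
        ∀ a i, i ∈ S a → ∀ x, ∃ L : ℝ, Tendsto (fun n => mt n a i x) atTop (nhds L))
    ∧
    -- (ii) m-convergence (to a strictly positive limit) implies b-convergence
    (∀ ml : F → V → Fin q → ℝ,
        (∀ a i, i ∈ S a → ∀ x, 0 < ml a i x) →
        (∀ a i, i ∈ S a → ∀ x, Tendsto (fun n => mt n a i x) atTop (nhds (ml a i x))) →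
        (∀ i x, ∃ L : ℝ, Tendsto (fun n => bv S φ (mt n) i x) atTop (nhds L)) ∧
        (∀ (a : F) (y : Config S q a),
          ∃ L : ℝ, Tendsto (fun n => bfn S φ ψ (mt n) a y) atTop (nhds L)))) := by
  have hpos := edgePositive_normalizedBP hφ hψ hNzero hNnonneg hm0 hrect
  refine ⟨fun bl bla hbl hbla hbv hbfn a i hi x => ?_, fun ml hml hlim =>
    ⟨fun i x => ⟨_, tendsto_bv hφ hml hlim i x⟩, fun a y => ⟨_, tendsto_bfn hφ hψ hml hlim a y⟩⟩⟩
  have : Nonempty (Fin q) := ⟨x⟩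
  choose ρ hρ hρlim using
    exists_pos_tendsto_div_of_tendsto_beliefs hpos hφ hψ hbl hbla hbv hbfn hi x
  have hnormalized : ∀ᶠ n in atTop, (∀ x, 0 < mt n a i x) ∧ N a i (mt n a i) = 1 := by
    filter_upwards [eventually_ge_atTop 1] with n hn
    obtain ⟨k, rfl⟩ := Nat.exists_eq_add_of_le' hn
    exact ⟨hpos _ a i hi, normalization_normalizedBP_eq_one hφ hψ hNhom hNzero hNnonneg
      (hpos k) hrect hi⟩
  exact ⟨_, tendsto_of_tendsto_div_of_normalization_eq_one (hNhom a i hi) (hNcont a i hi)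
    hnormalized hρlim (normalization_pos (hNzero a i hi) (hNnonneg a i hi) hρ).ne' x⟩

/-- For a continuous positive homogeneous normalization, `m`-convergence and `b`-convergence
of normalized BP are equivalent: (i) if the beliefs converge to strictly positive limits then
the messages converge; (ii) if the messages converge to a strictly positive limit then the
beliefs converge. -/
theorem m_convergence_iff_b_convergence
    (q : ℕ) (hq : 1 ≤ q) (S : F → Finset V) (hS : ∀ a, (S a).Nonempty)
    (φ : V → Fin q → ℝ) (ψ : ∀ a : F, Config S q a → ℝ)
    (hφ : ∀ i x, 0 < φ i x) (hψ : ∀ a y, 0 < ψ a y)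
    (N : F → V → (Fin q → ℝ) → ℝ)
    (hNhom : ∀ a i, i ∈ S a → ∀ lam : ℝ, 0 ≤ lam → ∀ u : Fin q → ℝ, (∀ x, 0 ≤ u x) →
      N a i (fun x => lam * u x) = lam * N a i u)
    (hNzero : ∀ a i, i ∈ S a → ∀ u : Fin q → ℝ, (∀ x, 0 ≤ u x) → (N a i u = 0 ↔ u = 0))
    (hNnonneg : ∀ a i, i ∈ S a → ∀ u : Fin q → ℝ, (∀ x, 0 ≤ u x) → 0 ≤ N a i u)
    (hNcont : ∀ a i, i ∈ S a → Continuous (N a i))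
    (mt : ℕ → F → V → Fin q → ℝ)
    (hm0 : ∀ a i, i ∈ S a → ∀ x, 0 < mt 0 a i x)
    (hrect : ∀ n a i (hi : i ∈ S a) (x : Fin q),
      mt (n + 1) a i x
        = theta S φ ψ (mt n) a i hi x / N a i (theta S φ ψ (mt n) a i hi)) :
    -- (i) b-convergence (to strictly positive limits) implies m-convergence
    ((∀ (bl : V → Fin q → ℝ) (bla : ∀ a : F, Config S q a → ℝ),
        (∀ i x, 0 < bl i x) → (∀ a y, 0 < bla a y) →
        (∀ i x, Tendsto (fun n => bv S φ (mt n) i x) atTop (nhds (bl i x))) →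
        (∀ (a : F) (y : Config S q a),
          Tendsto (fun n => bfn S φ ψ (mt n) a y) atTop (nhds (bla a y))) →
        ∀ a i, i ∈ S a → ∀ x, ∃ L : ℝ, Tendsto (fun n => mt n a i x) atTop (nhds L))
    ∧
    -- (ii) m-convergence (to a strictly positive limit) implies b-convergence
    (∀ ml : F → V → Fin q → ℝ,
        (∀ a i, i ∈ S a → ∀ x, 0 < ml a i x) →
        (∀ a i, i ∈ S a → ∀ x, Tendsto (fun n => mt n a i x) atTop (nhds (ml a i x))) →
        (∀ i x, ∃ L : ℝ, Tendsto (fun n => bv S φ (mt n) i x) atTop (nhds L)) ∧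
        (∀ (a : F) (y : Config S q a),
          ∃ L : ℝ, Tendsto (fun n => bfn S φ ψ (mt n) a y) atTop (nhds L)))) :=
  m_convergence_iff_b_convergence_general q S φ ψ hφ hψ N hNhom hNzero hNnonneg hNcont mt hm0 hrect
end

section
/- (Sufficient condition for local stability of a BP fixed point.) Assume the matrix A is irreducible and the set of triples (i,a,j) with i ≠ j in a is nonempty. Let λ₁ be the spectral radius (Perron eigenvalue) of A and μ₂ = max over all such triples of √(μ₂^{(iaj)}). If λ₁·μ₂ < 1, then every complex eigenvalue of the matrix J̃ has modulus strictly less than 1; i.e., the spectral radius of J̃ is strictly less than 1, so the BP fixed point associated with the beliefs b is locally stable for the normalized BP scheme. -/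
open Finset

variable {V F : Type*} [Fintype V] [DecidableEq V] [Fintype F] [DecidableEq F]

/-- The conditional-belief matrix `B^{(iaj)}`, with entries
`B^{(iaj)}_{kl} = (1/b_i(k)) Σ_{x_a : x_i = k, x_j = l} b_a(x_a)`. -/
noncomputable def Bmat (S : F → Finset V) {q : ℕ} (bv : V → Fin q → ℝ)
    (bf : ∀ a : F, Config S q a → ℝ) (a : F) (i j : V) :
    Matrix (Fin q) (Fin q) ℝ :=
  Matrix.of fun k l => (1 / bv i k) *
    ∑ y ∈ univ.filter (fun y : Config S q a =>
        ∀ v : {v : V // v ∈ S a}, (v.1 = i → y v = k) ∧ (v.1 = j → y v = l)),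
      bf a y

/-- The combined stochastic kernel `K^{(iaj)} = B^{(iaj)} B^{(jai)}`. -/
noncomputable def Kmat (S : F → Finset V) {q : ℕ} (bv : V → Fin q → ℝ)
    (bf : ∀ a : F, Config S q a → ℝ) (a : F) (i j : V) :
    Matrix (Fin q) (Fin q) ℝ :=
  Bmat S bv bf a i j * Bmat S bv bf a j i

/-- `μ₂^{(iaj)}`: the second eigenvalue of `K^{(iaj)}`, as the supremum of the Rayleigh
quotient over nonzero vectors with zero `b_i`-mean. -/
noncomputable def mu2 (S : F → Finset V) {q : ℕ} (bv : V → Fin q → ℝ)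
    (bf : ∀ a : F, Config S q a → ℝ) (a : F) (i j : V) : ℝ :=
  sSup {r : ℝ | ∃ x : Fin q → ℝ, x ≠ 0 ∧ (∑ k, x k * bv i k) = 0 ∧
    r = (∑ k, ∑ l, x k * x l * Kmat S bv bf a i j k l * bv i k) /
        (∑ k, x k ^ 2 * bv i k)}

/-- The 0-1 adjacency matrix `A` of the oriented line graph `L(G)`:
`A_{(a,i),(a',j)} = 1` iff `j ∈ a ∩ a'`, `j ≠ i` and `a' ≠ a`. -/
noncomputable def Amat (S : F → Finset V) : Matrix (F × V) (F × V) ℝ :=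
  Matrix.of fun e e' =>
    if e'.2 ∈ S e.1 ∧ e'.2 ∈ S e'.1 ∧ e'.2 ≠ e.2 ∧ e'.1 ≠ e.1 then 1 else 0

/-- Directed paths of length `n` from `e` to `e'` in the oriented line graph. -/
def pathSet (S : F → Finset V) (n : ℕ) (e e' : F × V) :
    Finset (Fin (n + 1) → F × V) :=
  univ.filter (fun γ => γ 0 = e ∧ γ (Fin.last n) = e' ∧
    ∀ t : Fin n,
      (γ t.succ).2 ∈ S (γ t.castSucc).1 ∧ (γ t.succ).2 ∈ S (γ t.succ).1 ∧
      (γ t.succ).2 ≠ (γ t.castSucc).2 ∧ (γ t.succ).1 ≠ (γ t.castSucc).1)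

/-- The stochastic kernel of a path: `B^γ = B^{(i_0 a_0 i_1)} ⋯ B^{(i_{n-1} a_{n-1} i_n)}`. -/
noncomputable def pathKernel (S : F → Finset V) {q : ℕ} (bv : V → Fin q → ℝ)
    (bf : ∀ a : F, Config S q a → ℝ) {n : ℕ} (γ : Fin (n + 1) → F × V) :
    Matrix (Fin q) (Fin q) ℝ :=
  (List.ofFn fun t : Fin n =>
    Bmat S bv bf (γ t.castSucc).1 (γ t.castSucc).2 (γ t.succ).2).prod

/-- `μ₂ = max_{(iaj)} √(μ₂^{(iaj)})`, the maximum over all triples `(i,a,j)` with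
`i ≠ j` both in `a`. -/
noncomputable def mu2max (S : F → Finset V) {q : ℕ} (bv : V → Fin q → ℝ)
    (bf : ∀ a : F, Config S q a → ℝ) : ℝ :=
  sSup {r : ℝ | ∃ (a : F) (i j : V), i ∈ S a ∧ j ∈ S a ∧ i ≠ j ∧
    r = Real.sqrt (mu2 S bv bf a i j)}

/-- The Jacobian `J̃` of the message-normalized BP update at the fixed point with beliefs
`(b_i, b_a)` (for `φ_i = b_i`, `ψ_a = b_a/∏_{i∈a} b_i`, messages ≡ 1):
`J̃_{(a,i,k),(a',j,l)} = (B^{(iaj)}_{kl} − (1/q) Σ_x B^{(iaj)}_{xl}) A_{(a,i),(a',j)}`. -/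
noncomputable def Jtilde (S : F → Finset V) {q : ℕ} (bv : V → Fin q → ℝ)
    (bf : ∀ a : F, Config S q a → ℝ) :
    Matrix ((F × V) × Fin q) ((F × V) × Fin q) ℝ :=
  Matrix.of fun p p' =>
    (Bmat S bv bf p.1.1 p.1.2 p'.1.2 p.2 p'.2
        - (1 / (q : ℝ)) * ∑ x : Fin q, Bmat S bv bf p.1.1 p.1.2 p'.1.2 x p'.2) *
      Amat S p.1 p'.1

/-- `μ` is a (complex) eigenvalue of the real square matrix `M`. -/
def IsEigenvalue {n : Type*} [Fintype n] [DecidableEq n]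
    (M : Matrix n n ℝ) (μ : ℂ) : Prop :=
  ∃ v : n → ℂ, v ≠ 0 ∧ (M.map (fun t : ℝ => (t : ℂ))).mulVec v = μ • v

/-- The spectral radius of a real square matrix: the supremum of the moduli of its
complex eigenvalues. -/
noncomputable def specRad {n : Type*} [Fintype n] [DecidableEq n]
    (M : Matrix n n ℝ) : ℝ :=
  sSup {r : ℝ | ∃ μ : ℂ, IsEigenvalue M μ ∧ r = ‖μ‖}

/-!
Write an eigenvector `v` of `J̃` in blocks `v_e ∈ ℂ^q`, `e = (a, i)`, and centre each block with
respect to `b_i`. Since `B^{(iaj)}` is stochastic with `b_i B^{(iaj)} = b_j`, centring commutes with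
`B^{(iaj)}` and removes the uniform-mean correction in `J̃`, so the centred blocks satisfy
`μ w_e = Σ_{e'} A_{e e'} B^{(e e')} w_{e'}`. By detailed balance `‖B^{(iaj)} x‖²_{b_i}` is the
Rayleigh form of `K^{(jai)}` at `x`, so on centred vectors `B^{(iaj)}` shrinks the `b`-weighted
`ℓ²` norm by the factor `μ₂`. The profile `s_e = ‖w_e‖_{b_i}` is therefore a nonzero nonnegative
vector with `|μ| s ≤ μ₂ A s`; iterating and applying Gelfand's formula to `A` gives
`|μ| ≤ μ₂ λ₁ < 1`.
-/

open Matrix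

attribute [local instance] Matrix.linftyOpNormedRing Matrix.linftyOpNormedAlgebra

section SpectralRadius

variable {n : Type*} [Fintype n]

theorem mulVec_mono_of_nonneg {M : Matrix n n ℝ} (hM : ∀ i j, 0 ≤ M i j) {u v : n → ℝ}
    (huv : u ≤ v) : M *ᵥ u ≤ M *ᵥ v :=
  fun i => Finset.sum_le_sum fun j _ => mul_le_mul_of_nonneg_left (huv j) (hM i j)

variable [DecidableEq n]

theorem isEigenvalue_of_mem_spectrum (M : Matrix n n ℝ) {μ : ℂ}
    (h : μ ∈ spectrum ℂ (M.map (fun t : ℝ => (t : ℂ)))) : IsEigenvalue M μ := by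
  rw [← Matrix.spectrum_toLin', ← Module.End.hasEigenvalue_iff_mem_spectrum] at h
  obtain ⟨v, hv⟩ := h.exists_hasEigenvector
  exact ⟨v, hv.2, by simpa using Module.End.mem_eigenspace_iff.mp hv.1⟩

theorem IsEigenvalue.norm_le {M : Matrix n n ℝ} {μ : ℂ} (h : IsEigenvalue M μ) :
    ‖μ‖ ≤ ‖M.map (fun t : ℝ => (t : ℂ))‖ := by
  obtain ⟨v, hv, hMv⟩ := h
  refine le_of_mul_le_mul_right ?_ (norm_pos_iff.mpr hv)
  rw [← norm_smul, ← hMv]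
  exact Matrix.linfty_opNorm_mulVec _ _

theorem IsEigenvalue.norm_le_specRad {M : Matrix n n ℝ} {μ : ℂ} (h : IsEigenvalue M μ) :
    ‖μ‖ ≤ specRad M :=
  le_csSup ⟨_, by rintro r ⟨ν, hν, rfl⟩; exact hν.norm_le⟩ ⟨μ, h, rfl⟩

theorem spectralRadius_map_ofReal_le (M : Matrix n n ℝ) :
    spectralRadius ℂ (M.map (fun t : ℝ => (t : ℂ))) ≤ ENNReal.ofReal (specRad M) :=
  iSup₂_le fun _ hμ => by
    rw [← enorm_eq_nnnorm, ← ofReal_norm]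
    exact ENNReal.ofReal_le_ofReal (isEigenvalue_of_mem_spectrum M hμ).norm_le_specRad

theorem norm_map_ofReal_pow (M : Matrix n n ℝ) (m : ℕ) :
    ‖(M.map (fun t : ℝ => (t : ℂ))) ^ m‖ = ‖M ^ m‖ := by
  rw [show M.map (fun t : ℝ => (t : ℂ)) = Complex.ofRealHom.mapMatrix M from rfl, ← map_pow]
  simp [Matrix.linfty_opNorm_def]

theorem pow_smul_le_pow_smul_pow_mulVec {M : Matrix n n ℝ} (hM : ∀ i j, 0 ≤ M i j)
    {s : n → ℝ} {c d : ℝ} (hc : 0 ≤ c) (hd : 0 ≤ d) (h : c • s ≤ d • (M *ᵥ s)) (m : ℕ) :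
    c ^ m • s ≤ d ^ m • ((M ^ m) *ᵥ s) := by
  induction m with
  | zero => simp
  | succ m ih =>
    calc c ^ (m + 1) • s = c ^ m • (c • s) := by rw [pow_succ, mul_smul]
      _ ≤ c ^ m • (d • (M *ᵥ s)) := smul_le_smul_of_nonneg_left h (pow_nonneg hc m)
      _ = d • (M *ᵥ (c ^ m • s)) := by rw [Matrix.mulVec_smul, smul_comm]
      _ ≤ d • (M *ᵥ (d ^ m • ((M ^ m) *ᵥ s))) :=
          smul_le_smul_of_nonneg_left (mulVec_mono_of_nonneg hM ih) hd
      _ = d ^ (m + 1) • ((M ^ (m + 1)) *ᵥ s) := by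
          rw [Matrix.mulVec_smul, Matrix.mulVec_mulVec, smul_smul, ← pow_succ', ← pow_succ']

theorem pow_le_pow_mul_norm_pow_of_smul_le_mulVec {M : Matrix n n ℝ} (hM : ∀ i j, 0 ≤ M i j)
    {s : n → ℝ} (hs : 0 ≤ s) (hs0 : s ≠ 0) {c d : ℝ} (hc : 0 ≤ c) (hd : 0 ≤ d)
    (h : c • s ≤ d • (M *ᵥ s)) (m : ℕ) : c ^ m ≤ d ^ m * ‖M ^ m‖ := by
  refine le_of_mul_le_mul_right ?_ (norm_pos_iff.mpr hs0)
  calc c ^ m * ‖s‖ = ‖c ^ m • s‖ := by rw [norm_smul, Real.norm_of_nonneg (pow_nonneg hc m)]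
    _ ≤ ‖d ^ m • ((M ^ m) *ᵥ s)‖ := by
        refine (pi_norm_le_iff_of_nonneg (norm_nonneg _)).mpr fun i => ?_
        rw [Real.norm_of_nonneg (smul_nonneg (pow_nonneg hc m) hs i)]
        exact (pow_smul_le_pow_smul_pow_mulVec hM hc hd h m i).trans
          ((Real.le_norm_self _).trans (norm_le_pi_norm _ i))
    _ ≤ d ^ m * (‖M ^ m‖ * ‖s‖) := by
        rw [norm_smul, Real.norm_of_nonneg (pow_nonneg hd m)]
        gcongr
        exact linfty_opNorm_mulVec _ _
    _ = d ^ m * ‖M ^ m‖ * ‖s‖ := by ring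

theorem le_mul_specRad_of_smul_le_mulVec {M : Matrix n n ℝ} (hM : ∀ i j, 0 ≤ M i j)
    {s : n → ℝ} (hs : 0 ≤ s) (hs0 : s ≠ 0) {c d : ℝ} (hc : 0 < c) (hd : 0 ≤ d)
    (h : c • s ≤ d • (M *ᵥ s)) : c ≤ d * specRad M := by
  have hroot : ∀ m : ℕ, 1 ≤ m → ENNReal.ofReal c ≤ ENNReal.ofReal d *
      ENNReal.ofReal (‖(M.map (fun t : ℝ => (t : ℂ))) ^ m‖ ^ (1 / m : ℝ)) := fun m hm => by
    have hm0 : m ≠ 0 := by omega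
    rw [← ENNReal.ofReal_mul hd, norm_map_ofReal_pow, one_div]
    refine ENNReal.ofReal_le_ofReal ?_
    calc c = (c ^ m) ^ (m⁻¹ : ℝ) := (Real.pow_rpow_inv_natCast hc.le hm0).symm
      _ ≤ (d ^ m * ‖M ^ m‖) ^ (m⁻¹ : ℝ) := by
          gcongr
          exact pow_le_pow_mul_norm_pow_of_smul_le_mulVec hM hs hs0 hc.le hd h m
      _ = d * ‖M ^ m‖ ^ (m⁻¹ : ℝ) := by
          rw [Real.mul_rpow (pow_nonneg hd m) (norm_nonneg _),
            Real.pow_rpow_inv_natCast hd hm0]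
  have hgelfand : ENNReal.ofReal c ≤
      ENNReal.ofReal d * spectralRadius ℂ (M.map (fun t : ℝ => (t : ℂ))) :=
    ge_of_tendsto (ENNReal.Tendsto.const_mul
      (spectrum.pow_norm_pow_one_div_tendsto_nhds_spectralRadius _)
      (Or.inr ENNReal.ofReal_ne_top)) (Filter.eventually_atTop.mpr ⟨1, hroot⟩)
  have hle : ENNReal.ofReal c ≤ ENNReal.ofReal d * ENNReal.ofReal (specRad M) :=
    hgelfand.trans (by gcongr; exact spectralRadius_map_ofReal_le M)
  rw [← ENNReal.ofReal_mul hd, ENNReal.ofReal_le_ofReal_iff'] at hle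
  exact hle.resolve_right hc.not_ge

end SpectralRadius

section WeightedL2

variable {ι : Type*}

noncomputable def weightedEmbedding (b : ι → ℝ) : (ι → ℂ) →ₗ[ℂ] EuclideanSpace ℂ ι :=
  (WithLp.linearEquiv 2 ℂ (ι → ℂ)).symm.toLinearMap ∘ₗ
    LinearMap.pi fun k => (Real.sqrt (b k) : ℂ) • LinearMap.proj k

theorem weightedEmbedding_apply (b : ι → ℝ) (z : ι → ℂ) (k : ι) :
    weightedEmbedding b z k = Real.sqrt (b k) * z k := rfl

theorem norm_weightedEmbedding_sq [Fintype ι] {b : ι → ℝ} (hb : ∀ k, 0 ≤ b k) (z : ι → ℂ) :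
    ‖weightedEmbedding b z‖ ^ 2 = ∑ k, b k * ‖z k‖ ^ 2 := by
  simp [EuclideanSpace.norm_sq_eq, weightedEmbedding_apply, mul_pow, Real.sq_sqrt (hb _)]

theorem weightedEmbedding_eq_zero {b : ι → ℝ} (hb : ∀ k, 0 < b k) {z : ι → ℂ}
    (hz : weightedEmbedding b z = 0) : z = 0 := by
  funext k
  have hk := congrArg (· k) hz
  simpa [weightedEmbedding_apply, Real.sqrt_ne_zero'.mpr (hb k)] using hk

noncomputable def centering [Fintype ι] (b : ι → ℝ) : (ι → ℂ) →ₗ[ℂ] (ι → ℂ) where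
  toFun z := z - fun _ => ∑ k, z k * b k
  map_add' z z' := by
    funext l
    simp only [Pi.add_apply, Pi.sub_apply, add_mul, Finset.sum_add_distrib]
    ring
  map_smul' c z := by
    funext l
    simp [Finset.mul_sum, mul_sub, mul_assoc]

theorem centering_apply [Fintype ι] (b : ι → ℝ) (z : ι → ℂ) :
    centering b z = z - fun _ => ∑ k, z k * b k := rfl

theorem centering_const [Fintype ι] {b : ι → ℝ} (hb : ∑ k, b k = 1) (c : ℂ) :
    centering b (fun _ => c) = 0 := by
  rw [centering_apply, ← Finset.mul_sum, ← Complex.ofReal_sum, hb]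
  simp

theorem sum_centering_mul [Fintype ι] {b : ι → ℝ} (hb : ∑ k, b k = 1) (z : ι → ℂ) :
    ∑ k, centering b z k * b k = 0 := by
  simp [centering_apply, sub_mul, Finset.sum_sub_distrib, ← Finset.mul_sum,
    ← Complex.ofReal_sum, hb]

theorem eq_const_of_centering_eq_zero [Fintype ι] {b : ι → ℝ} {z : ι → ℂ}
    (hz : centering b z = 0) :
    z = fun _ => ∑ k, z k * b k :=
  sub_eq_zero.mp hz

theorem sum_sq_mul_pos [Fintype ι] {b : ι → ℝ} (hb : ∀ k, 0 < b k) {x : ι → ℝ}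
    (hx : x ≠ 0) : 0 < ∑ k, x k ^ 2 * b k := by
  obtain ⟨k, hk⟩ := Function.ne_iff.mp hx
  exact Finset.sum_pos' (fun k _ => mul_nonneg (sq_nonneg _) (hb k).le)
    ⟨k, mem_univ k, mul_pos (sq_pos_iff.mpr hk) (hb k)⟩

end WeightedL2

section Beliefs

variable {V F : Type*} [DecidableEq V] {S : F → Finset V} {q : ℕ}

def BeliefsCompatible (bv : V → Fin q → ℝ) (bf : ∀ a : F, Config S q a → ℝ) : Prop :=
  ∀ a i (hi : i ∈ S a) (k : Fin q),
    ∑ y ∈ univ.filter (fun y : Config S q a => y ⟨i, hi⟩ = k), bf a y = bv i k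

def pairMarginal (bf : ∀ a : F, Config S q a → ℝ) (a : F) (i j : S a) (k l : Fin q) : ℝ :=
  ∑ y ∈ univ.filter (fun y : Config S q a => y i = k ∧ y j = l), bf a y

variable {bv : V → Fin q → ℝ} {bf : ∀ a : F, Config S q a → ℝ}

theorem pairMarginal_comm (a : F) (i j : S a) (k l : Fin q) :
    pairMarginal bf a i j k l = pairMarginal bf a j i l k := by
  simp only [pairMarginal, and_comm]

theorem sum_pairMarginal_right (hcompat : BeliefsCompatible bv bf) (a : F) (i j : S a)
    (k : Fin q) : ∑ l, pairMarginal bf a i j k l = bv i k := by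
  rw [← hcompat a i i.2 k, ← Finset.sum_fiberwise _ (fun y : Config S q a => y j)]
  simp only [pairMarginal, Finset.filter_filter]

theorem Bmat_apply_eq_pairMarginal_div (a : F) (i j : S a) (k l : Fin q) :
    Bmat S bv bf a i j k l = pairMarginal bf a i j k l / bv i k := by
  rw [Bmat, Matrix.of_apply, one_div, inv_mul_eq_div, pairMarginal]
  congr 2
  ext y
  simp only [mem_filter, mem_univ, true_and]
  refine ⟨fun h => ⟨(h i).1 rfl, (h j).2 rfl⟩, fun ⟨hk, hl⟩ v => ?_⟩
  exact ⟨fun hv => Subtype.ext hv ▸ hk, fun hv => Subtype.ext hv ▸ hl⟩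

theorem bv_mul_Bmat (hbv : ∀ i x, 0 < bv i x) (a : F) (i j : S a) (k l : Fin q) :
    bv i k * Bmat S bv bf a i j k l = pairMarginal bf a i j k l := by
  rw [Bmat_apply_eq_pairMarginal_div, mul_div_cancel₀ _ (hbv i k).ne']

theorem Bmat_nonneg (hbv : ∀ i x, 0 < bv i x) (hbf : ∀ a y, 0 < bf a y) (a : F) (i j : S a)
    (k l : Fin q) : 0 ≤ Bmat S bv bf a i j k l := by
  rw [Bmat_apply_eq_pairMarginal_div]
  exact div_nonneg (Finset.sum_nonneg fun y _ => (hbf a y).le) (hbv i k).le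

theorem sum_Bmat_row (hbv : ∀ i x, 0 < bv i x) (hcompat : BeliefsCompatible bv bf) (a : F)
    (i j : S a) (k : Fin q) : ∑ l, Bmat S bv bf a i j k l = 1 := by
  simp_rw [Bmat_apply_eq_pairMarginal_div, ← Finset.sum_div, sum_pairMarginal_right hcompat,
    div_self (hbv i k).ne']

theorem sum_bv_mul_Bmat (hbv : ∀ i x, 0 < bv i x) (hcompat : BeliefsCompatible bv bf)
    (a : F) (i j : S a) (l : Fin q) : ∑ k, bv i k * Bmat S bv bf a i j k l = bv j l := by
  simp_rw [bv_mul_Bmat hbv, pairMarginal_comm a i j _ l, sum_pairMarginal_right hcompat]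

theorem sum_bv_mul_sq_Bmat_mulVec_eq_Kmat (hbv : ∀ i x, 0 < bv i x) (a : F) (i j : S a)
    (x : Fin q → ℝ) :
    ∑ m, bv i m * (Bmat S bv bf a i j *ᵥ x) m ^ 2
      = ∑ k, ∑ l, x k * x l * Kmat S bv bf a j i k l * bv j k := by
  -- detailed balance: `b_j(k) B^{(jai)}_{km} = b_i(m) B^{(iaj)}_{mk}`
  have hK : ∀ k l, Kmat S bv bf a j i k l * bv j k
      = ∑ m, bv i m * Bmat S bv bf a i j m k * Bmat S bv bf a i j m l := fun k l => by
    rw [Kmat, Matrix.mul_apply, Finset.sum_mul]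
    refine Finset.sum_congr rfl fun m _ => ?_
    rw [bv_mul_Bmat hbv, pairMarginal_comm, ← bv_mul_Bmat hbv a j i k m]
    ring
  simp_rw [mulVec, dotProduct, sq, Finset.sum_mul_sum, Finset.mul_sum]
  rw [Finset.sum_comm]
  refine Finset.sum_congr rfl fun k _ => ?_
  rw [Finset.sum_comm]
  refine Finset.sum_congr rfl fun l _ => ?_
  rw [mul_assoc (x k * x l), hK, Finset.mul_sum]
  exact Finset.sum_congr rfl fun m _ => by ring

theorem sum_bv_mul_sq_Bmat_mulVec_le (hbv : ∀ i x, 0 < bv i x) (hbf : ∀ a y, 0 < bf a y)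
    (hcompat : BeliefsCompatible bv bf) (a : F) (i j : S a) (x : Fin q → ℝ) :
    ∑ m, bv i m * (Bmat S bv bf a i j *ᵥ x) m ^ 2 ≤ ∑ l, x l ^ 2 * bv j l := by
  have hjensen : ∀ m, (Bmat S bv bf a i j *ᵥ x) m ^ 2 ≤ ∑ l, Bmat S bv bf a i j m l * x l ^ 2 :=
    fun m => by
      have h := Finset.sum_sq_le_sum_mul_sum_of_sq_le_mul univ
        (r := fun l => Bmat S bv bf a i j m l * x l)
        (fun l _ => Bmat_nonneg hbv hbf a i j m l)
        (fun l _ => mul_nonneg (Bmat_nonneg hbv hbf a i j m l) (sq_nonneg (x l)))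
        (fun l _ => le_of_eq (by ring))
      rwa [sum_Bmat_row hbv hcompat, one_mul] at h
  calc ∑ m, bv i m * (Bmat S bv bf a i j *ᵥ x) m ^ 2
      ≤ ∑ m, bv i m * ∑ l, Bmat S bv bf a i j m l * x l ^ 2 :=
        Finset.sum_le_sum fun m _ => mul_le_mul_of_nonneg_left (hjensen m) (hbv i m).le
    _ = ∑ l, x l ^ 2 * ∑ m, bv i m * Bmat S bv bf a i j m l := by
        simp_rw [Finset.mul_sum]
        rw [Finset.sum_comm]
        exact Finset.sum_congr rfl fun l _ => Finset.sum_congr rfl fun m _ => by ring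
    _ = ∑ l, x l ^ 2 * bv j l := by simp_rw [sum_bv_mul_Bmat hbv hcompat]

theorem sum_bv_mul_sq_Bmat_mulVec_le_mu2 (hbv : ∀ i x, 0 < bv i x) (hbf : ∀ a y, 0 < bf a y)
    (hcompat : BeliefsCompatible bv bf) (a : F) (i j : S a) {x : Fin q → ℝ}
    (hx : ∑ l, x l * bv j l = 0) :
    ∑ m, bv i m * (Bmat S bv bf a i j *ᵥ x) m ^ 2 ≤ mu2 S bv bf a j i * ∑ l, x l ^ 2 * bv j l := by
  rcases eq_or_ne x 0 with rfl | hx0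
  · simp
  have hD := sum_sq_mul_pos (hbv j) hx0
  have hbdd : BddAbove {r : ℝ | ∃ x : Fin q → ℝ, x ≠ 0 ∧ (∑ k, x k * bv j k) = 0 ∧
      r = (∑ k, ∑ l, x k * x l * Kmat S bv bf a j i k l * bv j k) / (∑ k, x k ^ 2 * bv j k)} := by
    refine ⟨1, ?_⟩
    rintro r ⟨y, hy0, -, rfl⟩
    rw [div_le_one (sum_sq_mul_pos (hbv j) hy0), ← sum_bv_mul_sq_Bmat_mulVec_eq_Kmat hbv]
    exact sum_bv_mul_sq_Bmat_mulVec_le hbv hbf hcompat a i j y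
  rw [sum_bv_mul_sq_Bmat_mulVec_eq_Kmat hbv, ← div_le_iff₀ hD]
  exact le_csSup hbdd ⟨x, hx0, hx, rfl⟩

theorem mu2_le_mu2max_sq [Finite F] [Finite V] (bv : V → Fin q → ℝ)
    (bf : ∀ a : F, Config S q a → ℝ) {a : F} {i j : V} (hi : i ∈ S a) (hj : j ∈ S a)
    (hij : i ≠ j) : mu2 S bv bf a i j ≤ mu2max S bv bf ^ 2 := by
  have hbdd : BddAbove {r : ℝ | ∃ (a : F) (i j : V), i ∈ S a ∧ j ∈ S a ∧ i ≠ j ∧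
      r = Real.sqrt (mu2 S bv bf a i j)} :=
    (Set.finite_range fun t : F × V × V => Real.sqrt (mu2 S bv bf t.1 t.2.1 t.2.2)).bddAbove.mono
      (by rintro _ ⟨a, i, j, -, -, -, rfl⟩; exact ⟨(a, i, j), rfl⟩)
  -- `Real.sqrt_le_iff` also covers `mu2 < 0`, where the square root is the junk value `0`
  exact (Real.sqrt_le_iff.mp (le_csSup hbdd ⟨a, i, j, hi, hj, hij, rfl⟩)).2

theorem mu2max_nonneg (bv : V → Fin q → ℝ) (bf : ∀ a : F, Config S q a → ℝ) :
    0 ≤ mu2max S bv bf :=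
  Real.sSup_nonneg fun _ ⟨_, _, _, _, _, _, hr⟩ => hr ▸ Real.sqrt_nonneg _

theorem Bmat_map_mulVec_const (hbv : ∀ i x, 0 < bv i x) (hcompat : BeliefsCompatible bv bf)
    (a : F) (i j : S a) (c : ℂ) :
    (Bmat S bv bf a i j).map Complex.ofReal *ᵥ (fun _ => c) = fun _ => c := by
  funext k
  simp [mulVec, dotProduct, ← Finset.sum_mul, ← Complex.ofReal_sum, sum_Bmat_row hbv hcompat]

theorem sum_Bmat_map_mulVec_mul (hbv : ∀ i x, 0 < bv i x) (hcompat : BeliefsCompatible bv bf)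
    (a : F) (i j : S a) (z : Fin q → ℂ) :
    ∑ k, ((Bmat S bv bf a i j).map Complex.ofReal *ᵥ z) k * bv i k = ∑ l, z l * bv j l := by
  simp only [mulVec, dotProduct, Matrix.map_apply, Finset.sum_mul]
  rw [Finset.sum_comm]
  refine Finset.sum_congr rfl fun l _ => ?_
  rw [← sum_bv_mul_Bmat hbv hcompat a i j l, Complex.ofReal_sum, Finset.mul_sum]
  exact Finset.sum_congr rfl fun k _ => by push_cast; ring

theorem centering_Bmat_map_mulVec (hbv : ∀ i x, 0 < bv i x) (hcompat : BeliefsCompatible bv bf)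
    (a : F) (i j : S a) (z : Fin q → ℂ) :
    centering (bv i) ((Bmat S bv bf a i j).map Complex.ofReal *ᵥ z)
      = (Bmat S bv bf a i j).map Complex.ofReal *ᵥ centering (bv j) z := by
  rw [centering_apply, centering_apply, mulVec_sub, Bmat_map_mulVec_const hbv hcompat,
    sum_Bmat_map_mulVec_mul hbv hcompat]

theorem sum_bv_mul_sq_Bmat_mulVec_le_mu2max_sq [Finite F] [Finite V]
    (hbv : ∀ i x, 0 < bv i x) (hbf : ∀ a y, 0 < bf a y) (hcompat : BeliefsCompatible bv bf)
    {a : F} (i j : S a) (hij : (i : V) ≠ j) {x : Fin q → ℝ} (hx : ∑ l, x l * bv j l = 0) :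
    ∑ m, bv i m * (Bmat S bv bf a i j *ᵥ x) m ^ 2
      ≤ mu2max S bv bf ^ 2 * ∑ l, x l ^ 2 * bv j l :=
  (sum_bv_mul_sq_Bmat_mulVec_le_mu2 hbv hbf hcompat a i j hx).trans <|
    mul_le_mul_of_nonneg_right (mu2_le_mu2max_sq bv bf j.2 i.2 hij.symm)
      (Finset.sum_nonneg fun l _ => mul_nonneg (sq_nonneg _) (hbv j l).le)

theorem norm_weightedEmbedding_Bmat_map_mulVec_le [Finite F] [Finite V]
    (hbv : ∀ i x, 0 < bv i x) (hbf : ∀ a y, 0 < bf a y) (hcompat : BeliefsCompatible bv bf)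
    {a : F} (i j : S a) (hij : (i : V) ≠ j) {z : Fin q → ℂ} (hz : ∑ l, z l * bv j l = 0) :
    ‖weightedEmbedding (bv i) ((Bmat S bv bf a i j).map Complex.ofReal *ᵥ z)‖
      ≤ mu2max S bv bf * ‖weightedEmbedding (bv j) z‖ := by
  have hre : ∑ l, (z l).re * bv j l = 0 := by simpa [Complex.re_sum] using congrArg Complex.re hz
  have him : ∑ l, (z l).im * bv j l = 0 := by simpa [Complex.im_sum] using congrArg Complex.im hz
  have hsplit : ∀ m, ‖((Bmat S bv bf a i j).map Complex.ofReal *ᵥ z) m‖ ^ 2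
      = (Bmat S bv bf a i j *ᵥ fun l => (z l).re) m ^ 2
        + (Bmat S bv bf a i j *ᵥ fun l => (z l).im) m ^ 2 := fun m => by
    rw [Complex.sq_norm, Complex.normSq_apply]
    simp [mulVec, dotProduct, Complex.re_sum, Complex.im_sum, sq]
  have hsq : ‖weightedEmbedding (bv i) ((Bmat S bv bf a i j).map Complex.ofReal *ᵥ z)‖ ^ 2
      ≤ (mu2max S bv bf * ‖weightedEmbedding (bv j) z‖) ^ 2 := by
    rw [mul_pow, norm_weightedEmbedding_sq (fun k => (hbv i k).le),
      norm_weightedEmbedding_sq (fun k => (hbv j k).le)]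
    calc ∑ m, bv i m * ‖((Bmat S bv bf a i j).map Complex.ofReal *ᵥ z) m‖ ^ 2
        = ∑ m, bv i m * (Bmat S bv bf a i j *ᵥ fun l => (z l).re) m ^ 2
          + ∑ m, bv i m * (Bmat S bv bf a i j *ᵥ fun l => (z l).im) m ^ 2 := by
          simp_rw [hsplit, mul_add, Finset.sum_add_distrib]
      _ ≤ mu2max S bv bf ^ 2 * ∑ l, (z l).re ^ 2 * bv j l
          + mu2max S bv bf ^ 2 * ∑ l, (z l).im ^ 2 * bv j l :=
          add_le_add (sum_bv_mul_sq_Bmat_mulVec_le_mu2max_sq hbv hbf hcompat i j hij hre)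
            (sum_bv_mul_sq_Bmat_mulVec_le_mu2max_sq hbv hbf hcompat i j hij him)
      _ = mu2max S bv bf ^ 2 * ∑ l, bv j l * ‖z l‖ ^ 2 := by
          simp_rw [← mul_add, ← Finset.sum_add_distrib, Complex.sq_norm, Complex.normSq_apply]
          congr 1
          exact Finset.sum_congr rfl fun l _ => by ring
  exact (pow_le_pow_iff_left₀ (norm_nonneg _)
    (mul_nonneg (mu2max_nonneg bv bf) (norm_nonneg _)) two_ne_zero).mp hsq

end Beliefs

section EdgeFunctions

variable {V F : Type*} [DecidableEq V] (S : F → Finset V)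

theorem Amat_nonneg [DecidableEq F] (e e' : F × V) : 0 ≤ Amat S e e' := by
  simp only [Amat, Matrix.of_apply]
  split_ifs <;> norm_num

theorem adjacent_of_Amat_ne_zero [DecidableEq F] {e e' : F × V} (h : Amat S e e' ≠ 0) :
    e'.2 ∈ S e.1 ∧ e'.2 ∈ S e'.1 ∧ e'.2 ≠ e.2 ∧ e'.1 ≠ e.1 := by
  by_contra hc
  exact h (by simp [Amat, hc])

noncomputable def centeredProfile {q : ℕ} (bv : V → Fin q → ℝ)
    (v : (F × V) × Fin q → ℂ) (e : F × V) : ℝ :=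
  if e.2 ∈ S e.1 then ‖weightedEmbedding (bv e.2) (centering (bv e.2) (Function.curry v e))‖
  else 0

theorem centeredProfile_nonneg {q : ℕ} {bv : V → Fin q → ℝ} (v : (F × V) × Fin q → ℂ) :
    0 ≤ centeredProfile S bv v :=
  fun e => by
    unfold centeredProfile
    split_ifs <;> simp

end EdgeFunctions

section Jacobian

variable {S : F → Finset V} {q : ℕ} {bv : V → Fin q → ℝ} {bf : ∀ a : F, Config S q a → ℝ}

theorem Jtilde_eigen_block {μ : ℂ} {v : (F × V) × Fin q → ℂ}
    (h : (Jtilde S bv bf).map (fun t : ℝ => (t : ℂ)) *ᵥ v = μ • v) (e : F × V) :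
    μ • Function.curry v e = ∑ e', (Amat S e e' : ℂ) •
      ((Bmat S bv bf e.1 e.2 e'.2).map Complex.ofReal *ᵥ Function.curry v e'
        - fun _ => (q : ℂ)⁻¹ * ∑ x, ((Bmat S bv bf e.1 e.2 e'.2).map Complex.ofReal
          *ᵥ Function.curry v e') x) := by
  funext k
  have hk := congrFun h (e, k)
  simp only [mulVec, dotProduct, Matrix.map_apply, Jtilde, Matrix.of_apply, Pi.smul_apply,
    smul_eq_mul] at hk
  rw [Fintype.sum_prod_type] at hk
  rw [Pi.smul_apply, smul_eq_mul, Function.curry_apply, ← hk, Finset.sum_apply]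
  refine Finset.sum_congr rfl fun e' _ => ?_
  simp only [Pi.smul_apply, Pi.sub_apply, smul_eq_mul, mulVec, dotProduct, Matrix.map_apply,
    Function.curry_apply, Finset.mul_sum, Finset.sum_mul, mul_sub, sub_mul]
  push_cast
  rw [Finset.sum_comm, ← Finset.sum_sub_distrib]
  refine Finset.sum_congr rfl fun l _ => ?_
  rw [sub_mul, Finset.sum_mul]
  congr 1
  · ring
  · exact Finset.sum_congr rfl fun x _ => by ring

theorem Jtilde_eigen_centered_block (hbv : ∀ i x, 0 < bv i x) (hsumv : ∀ i, ∑ x, bv i x = 1)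
    (hcompat : BeliefsCompatible bv bf) {μ : ℂ} {v : (F × V) × Fin q → ℂ}
    (h : (Jtilde S bv bf).map (fun t : ℝ => (t : ℂ)) *ᵥ v = μ • v) {e : F × V}
    (he : e.2 ∈ S e.1) :
    μ • centering (bv e.2) (Function.curry v e) = ∑ e', (Amat S e e' : ℂ) •
      ((Bmat S bv bf e.1 e.2 e'.2).map Complex.ofReal
        *ᵥ centering (bv e'.2) (Function.curry v e')) := by
  rw [← map_smul, Jtilde_eigen_block h e, map_sum]
  refine Finset.sum_congr rfl fun e' _ => ?_
  rcases eq_or_ne (Amat S e e') 0 with hA | hA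
  · simp [hA]
  obtain ⟨he', -, -, -⟩ := adjacent_of_Amat_ne_zero S hA
  rw [map_smul, map_sub, centering_const (hsumv _), sub_zero,
    centering_Bmat_map_mulVec hbv hcompat e.1 ⟨e.2, he⟩ ⟨e'.2, he'⟩]

theorem eq_zero_of_centering_eq_zero (hbv : ∀ i x, 0 < bv i x)
    (hcompat : BeliefsCompatible bv bf) {μ : ℂ} {v : (F × V) × Fin q → ℂ}
    (h : (Jtilde S bv bf).map (fun t : ℝ => (t : ℂ)) *ᵥ v = μ • v) (hμ : μ ≠ 0)
    (hw : ∀ e : F × V, e.2 ∈ S e.1 → centering (bv e.2) (Function.curry v e) = 0) : v = 0 := by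
  -- `F × V` also indexes pairs `(a, i)` with `i ∉ a`, where `B^{(iaj)}` is not stochastic; their
  -- rows of `J̃` only see blocks at genuine edges, so those blocks are treated first
  have hvalid : ∀ e : F × V, e.2 ∈ S e.1 → Function.curry v e = 0 := fun e he => by
    have hblock := Jtilde_eigen_block h e
    rw [Finset.sum_eq_zero fun e' _ => ?_] at hblock
    · exact (smul_eq_zero.mp hblock).resolve_left hμ
    rcases eq_or_ne (Amat S e e') 0 with hA | hA
    · simp [hA]
    obtain ⟨he', hv', -, -⟩ := adjacent_of_Amat_ne_zero S hA
    rw [eq_const_of_centering_eq_zero (hw e' hv'),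
      Bmat_map_mulVec_const hbv hcompat e.1 ⟨e.2, he⟩ ⟨e'.2, he'⟩]
    funext k
    have hq : (q : ℂ) ≠ 0 := Nat.cast_ne_zero.mpr k.pos.ne'
    simp [hq]
  funext ⟨e, k⟩
  have hblock := Jtilde_eigen_block h e
  rw [Finset.sum_eq_zero fun e' _ => ?_] at hblock
  · exact congrFun ((smul_eq_zero.mp hblock).resolve_left hμ) k
  rcases eq_or_ne (Amat S e e') 0 with hA | hA
  · simp [hA]
  · simp [hvalid e' (adjacent_of_Amat_ne_zero S hA).2.1, ← Pi.zero_def]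

theorem centeredProfile_ne_zero (hbv : ∀ i x, 0 < bv i x) (hcompat : BeliefsCompatible bv bf)
    {μ : ℂ} {v : (F × V) × Fin q → ℂ}
    (h : (Jtilde S bv bf).map (fun t : ℝ => (t : ℂ)) *ᵥ v = μ • v) (hμ : μ ≠ 0) (hv : v ≠ 0) :
    centeredProfile S bv v ≠ 0 := fun h0 =>
  hv <| eq_zero_of_centering_eq_zero hbv hcompat h hμ fun e he =>
    weightedEmbedding_eq_zero (hbv e.2) <| by simpa [centeredProfile, he] using congrFun h0 e

theorem Amat_mul_norm_transfer_centering_le (hbv : ∀ i x, 0 < bv i x)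
    (hbf : ∀ a y, 0 < bf a y) (hsumv : ∀ i, ∑ x, bv i x = 1) (hcompat : BeliefsCompatible bv bf)
    (v : (F × V) × Fin q → ℂ) {e : F × V} (he : e.2 ∈ S e.1) (e' : F × V) :
    Amat S e e' * ‖weightedEmbedding (bv e.2) ((Bmat S bv bf e.1 e.2 e'.2).map Complex.ofReal
        *ᵥ centering (bv e'.2) (Function.curry v e'))‖
      ≤ Amat S e e' * (mu2max S bv bf * centeredProfile S bv v e') := by
  rcases eq_or_ne (Amat S e e') 0 with hA | hA
  · simp [hA]
  obtain ⟨he', hv', hne, -⟩ := adjacent_of_Amat_ne_zero S hA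
  rw [centeredProfile, if_pos hv']
  exact mul_le_mul_of_nonneg_left (norm_weightedEmbedding_Bmat_map_mulVec_le hbv hbf hcompat
    ⟨e.2, he⟩ ⟨e'.2, he'⟩ hne.symm (sum_centering_mul (hsumv _) _)) (Amat_nonneg S e e')

theorem norm_smul_centeredProfile_le (hbv : ∀ i x, 0 < bv i x) (hbf : ∀ a y, 0 < bf a y)
    (hsumv : ∀ i, ∑ x, bv i x = 1) (hcompat : BeliefsCompatible bv bf) {μ : ℂ}
    {v : (F × V) × Fin q → ℂ} (h : (Jtilde S bv bf).map (fun t : ℝ => (t : ℂ)) *ᵥ v = μ • v) :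
    ‖μ‖ • centeredProfile S bv v ≤ mu2max S bv bf • (Amat S *ᵥ centeredProfile S bv v) := by
  intro e
  simp only [Pi.smul_apply, smul_eq_mul]
  by_cases he : e.2 ∈ S e.1
  swap
  · simp only [centeredProfile, he, if_false, mul_zero]
    exact mul_nonneg (mu2max_nonneg bv bf) (Finset.sum_nonneg fun e' _ =>
      mul_nonneg (Amat_nonneg S e e') (centeredProfile_nonneg S v e'))
  calc ‖μ‖ * centeredProfile S bv v e
      = ‖weightedEmbedding (bv e.2) (μ • centering (bv e.2) (Function.curry v e))‖ := by
        rw [map_smul, norm_smul, centeredProfile, if_pos he]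
    _ = ‖∑ e', (Amat S e e' : ℂ) • weightedEmbedding (bv e.2)
          ((Bmat S bv bf e.1 e.2 e'.2).map Complex.ofReal
            *ᵥ centering (bv e'.2) (Function.curry v e'))‖ := by
        rw [Jtilde_eigen_centered_block hbv hsumv hcompat h he, map_sum]
        simp_rw [map_smul]
    _ ≤ ∑ e', Amat S e e' * ‖weightedEmbedding (bv e.2)
          ((Bmat S bv bf e.1 e.2 e'.2).map Complex.ofReal
            *ᵥ centering (bv e'.2) (Function.curry v e'))‖ := by
        refine (norm_sum_le _ _).trans_eq (Finset.sum_congr rfl fun e' _ => ?_)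
        rw [norm_smul, Complex.norm_real, Real.norm_of_nonneg (Amat_nonneg S e e')]
    _ ≤ ∑ e', Amat S e e' * (mu2max S bv bf * centeredProfile S bv v e') :=
        Finset.sum_le_sum fun e' _ =>
          Amat_mul_norm_transfer_centering_le hbv hbf hsumv hcompat v he e'
    _ = mu2max S bv bf * (Amat S *ᵥ centeredProfile S bv v) e := by
        simp only [mulVec, dotProduct, Finset.mul_sum]
        exact Finset.sum_congr rfl fun e' _ => by ring

end Jacobian

theorem bp_fixed_point_locally_stable_general
    (q : ℕ) (S : F → Finset V)
    (bv : V → Fin q → ℝ) (bf : ∀ a : F, Config S q a → ℝ)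
    (hbv : ∀ i x, 0 < bv i x) (hbf : ∀ a y, 0 < bf a y)
    (hsumv : ∀ i, ∑ x, bv i x = 1)
    (hcompat : ∀ a i (hi : i ∈ S a) (k : Fin q),
      ∑ y ∈ univ.filter (fun y : Config S q a => y ⟨i, hi⟩ = k), bf a y = bv i k)
    (hcond : specRad (Amat S) * mu2max S bv bf < 1) :
    ∀ μ : ℂ, IsEigenvalue (Jtilde S bv bf) μ → ‖μ‖ < 1 := by
  rintro μ ⟨v, hv, h⟩
  rcases eq_or_ne μ 0 with rfl | hμ
  · simp
  calc ‖μ‖ ≤ mu2max S bv bf * specRad (Amat S) :=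
        le_mul_specRad_of_smul_le_mulVec (Amat_nonneg S) (centeredProfile_nonneg S v)
          (centeredProfile_ne_zero hbv hcompat h hμ hv) (norm_pos_iff.mpr hμ)
          (mu2max_nonneg bv bf) (norm_smul_centeredProfile_le hbv hbf hsumv hcompat h)
    _ < 1 := by rwa [mul_comm]

/-- Sufficient condition for local stability of a BP fixed point: if `λ₁ μ₂ < 1`, where
`λ₁` is the Perron (spectral radius) eigenvalue of `A` and `μ₂ = max √(μ₂^{(iaj)})`, then
every complex eigenvalue of the Jacobian `J̃` has modulus strictly less than `1`. -/
theorem bp_fixed_point_locally_stable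
    (q : ℕ) (hq : 2 ≤ q) (S : F → Finset V) (hcard : ∀ a, 2 ≤ (S a).card)
    (bv : V → Fin q → ℝ) (bf : ∀ a : F, Config S q a → ℝ)
    (hbv : ∀ i x, 0 < bv i x) (hbf : ∀ a y, 0 < bf a y)
    (hsumv : ∀ i, ∑ x, bv i x = 1)
    (hsumf : ∀ a, ∑ y : Config S q a, bf a y = 1)
    (hcompat : ∀ a i (hi : i ∈ S a) (k : Fin q),
      ∑ y ∈ univ.filter (fun y : Config S q a => y ⟨i, hi⟩ = k), bf a y = bv i k)
    (htriple : ∃ (a : F) (i j : V), i ∈ S a ∧ j ∈ S a ∧ i ≠ j)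
    (hirr : ∀ e e' : F × V, e.2 ∈ S e.1 → e'.2 ∈ S e'.1 →
      ∃ n : ℕ, 0 < n ∧ 0 < (Amat S ^ n) e e')
    (hcond : specRad (Amat S) * mu2max S bv bf < 1) :
    ∀ μ : ℂ, IsEigenvalue (Jtilde S bv bf) μ → ‖μ‖ < 1 :=
  bp_fixed_point_locally_stable_general q S bv bf hbv hbf hsumv hcompat hcond
end
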